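/- arXiv:0812.2858 — 4 statements merged into one kernel-verified Lean document; each statement's English description precedes it below -/
import Mathlib

section
/- Let H be a Hilbert space, A and B self-adjoint (or closed) operators with |A|² ≤ |B|² as quadratic forms, and Y a bounded operator such that BY is trace class. Then AY is trace class and ‖AY‖₁ ≤ ‖BY‖₁. -/
open MeasureTheory

variable {H : Type*} [NormedAddCommGroup H] [InnerProductSpace ℂ H] [CompleteSpace H]

local notation "⟪" x ", " y "⟫" => @inner ℂ _ _ x y

/-- The trace norm of a bounded operator, via the characterization
`‖T‖₁ = sup { Σₙ |⟨eₙ, T fₙ⟩| : (eₙ), (fₙ) orthonormal }` (valued in `ℝ≥0∞`;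
`T` is trace class iff this is finite). -/
noncomputable def traceNorm (T : H →L[ℂ] H) : ENNReal :=
  ⨆ (e : ℕ → H) (f : ℕ → H) (_ : Orthonormal ℂ e) (_ : Orthonormal ℂ f),
    ∑' n, (‖⟪e n, T (f n)⟫‖₊ : ENNReal)

/-!
If `‖T x‖ ≤ ‖S x‖` for all `x`, then `T = C S` for a contraction `C` (Douglas' lemma), so
`⟪e n, T (f n)⟫ = ⟪C† (e n), S (f n)⟫`. On a finite set of indices the vectors `C† (e n)` have a
Gram matrix `G ≤ 1`. Adding and subtracting vectors with Gram matrix `1 - G`, chosen orthogonal to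
everything else (an orthonormal sequence forces infinite dimension), gives two orthonormal families
`y`, `z` with `y n + z n = 2 C† (e n)`, so every partial sum for `T` is at most the average of two
partial sums for `S`.
-/

open scoped InnerProductSpace ComplexOrder MatrixOrder

section Orthonormal

variable {𝕜 E : Type*} [RCLike 𝕜] [NormedAddCommGroup E] [InnerProductSpace 𝕜 E]

theorem exists_orthonormal_of_not_finiteDimensional (hE : ¬ FiniteDimensional 𝕜 E)
    (ι : Type*) [Countable ι] : ∃ g : ι → E, Orthonormal 𝕜 g := by
  have : Infinite (Module.Basis.ofVectorSpaceIndex 𝕜 E) := by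
    rw [← not_finite_iff_infinite]
    exact fun _ ↦ hE (Module.Finite.of_basis (Module.Basis.ofVectorSpace 𝕜 E))
  obtain ⟨f, hf⟩ := exists_injective_nat ι
  have hb : LinearIndependent 𝕜 (Module.Basis.ofVectorSpace 𝕜 E ∘ Infinite.natEmbedding _) :=
    (Module.Basis.ofVectorSpace 𝕜 E).linearIndependent.comp _ (Infinite.natEmbedding _).injective
  exact ⟨_, (InnerProductSpace.gramSchmidtNormed_orthonormal hb).comp f hf⟩

theorem exists_orthonormal_mem_orthogonal (hE : ¬ FiniteDimensional 𝕜 E) (K : Submodule 𝕜 E)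
    [FiniteDimensional 𝕜 K] (ι : Type*) [Countable ι] :
    ∃ g : ι → E, Orthonormal 𝕜 g ∧ ∀ i, g i ∈ Kᗮ := by
  have hK : ¬ FiniteDimensional 𝕜 Kᗮ := by
    intro
    have : FiniteDimensional 𝕜 (K ⊔ Kᗮ : Submodule 𝕜 E) := inferInstance
    rw [K.sup_orthogonal_of_hasOrthogonalProjection] at this
    exact hE (Module.Finite.equiv (Submodule.topEquiv (R := 𝕜) (M := E)))
  obtain ⟨g, hg⟩ := exists_orthonormal_of_not_finiteDimensional hK ι
  exact ⟨_, hg.comp_linearIsometry Kᗮ.subtypeₗᵢ, fun i ↦ (g i).2⟩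

theorem Orthonormal.exists_orthonormal_extension (hE : ¬ FiniteDimensional 𝕜 E) {ι : Type*}
    [Countable ι] {s : Finset ι} {u : s → E} (hu : Orthonormal 𝕜 u) :
    ∃ y : ι → E, Orthonormal 𝕜 y ∧ ∀ i : s, y i = u i := by
  classical
  have := FiniteDimensional.span_of_finite 𝕜 (Set.finite_range u)
  obtain ⟨g, hg, hgK⟩ := exists_orthonormal_mem_orthogonal hE (Submodule.span 𝕜 (Set.range u)) ι
  have hug (i : s) (j : ι) : ⟪u i, g j⟫_𝕜 = 0 :=
    Submodule.inner_right_of_mem_orthogonal (Submodule.subset_span (Set.mem_range_self i)) (hgK j)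
  refine ⟨fun i ↦ if h : i ∈ s then u ⟨i, h⟩ else g i, ?_, fun i ↦ dif_pos i.2⟩
  rw [orthonormal_iff_ite] at hu hg ⊢
  intro i j
  by_cases hi : i ∈ s <;> by_cases hj : j ∈ s
  · simpa [hi, hj] using hu ⟨i, hi⟩ ⟨j, hj⟩
  · simp [hi, hj, hug, show i ≠ j by grind]
  · simp [hi, hj, ← inner_conj_symm (g i), hug, show i ≠ j by grind]
  · simpa [hi, hj] using hg i j

end Orthonormal

namespace Matrix

variable {𝕜 E F ι κ : Type*} [RCLike 𝕜] [NormedAddCommGroup E] [InnerProductSpace 𝕜 E]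
  [NormedAddCommGroup F] [InnerProductSpace 𝕜 F]

theorem orthonormal_iff_gram_eq_one [DecidableEq ι] {v : ι → E} :
    Orthonormal 𝕜 v ↔ gram 𝕜 v = 1 := by
  rw [orthonormal_iff_ite, ← Matrix.ext_iff]
  simp [one_apply]

theorem gram_add_of_inner_eq_zero {v w : ι → E} (h : ∀ i j, ⟪v i, w j⟫_𝕜 = 0) :
    gram 𝕜 (v + w) = gram 𝕜 v + gram 𝕜 w := by
  ext i j
  simp [inner_add_left, inner_add_right, h, ← inner_conj_symm (w i) (v j)]

theorem gram_neg (v : ι → E) : gram 𝕜 (-v) = gram 𝕜 v := by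
  ext i j
  simp

theorem _root_.Orthonormal.gram_sum_smul [Fintype κ] {g : κ → E} (hg : Orthonormal 𝕜 g)
    (M : Matrix κ ι 𝕜) : gram 𝕜 (fun j ↦ ∑ k, M k j • g k) = Mᴴ * M := by
  ext i j
  simp [hg.inner_sum, mul_apply]

theorem posSemidef_gram_sub_gram_comp [Fintype ι] {V : E →L[𝕜] F} (hV : ‖V‖ ≤ 1) (v : ι → E) :
    (gram 𝕜 v - gram 𝕜 (V ∘ v)).PosSemidef := by
  refine .of_dotProduct_mulVec_nonneg ((isHermitian_gram 𝕜 _).sub (isHermitian_gram 𝕜 _))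
    fun c ↦ ?_
  have hV' : ∑ i, c i • V (v i) = V (∑ i, c i • v i) := by simp
  rw [sub_mulVec, dotProduct_sub, star_dotProduct_gram_mulVec, star_dotProduct_gram_mulVec,
    Function.comp_def, hV', inner_self_eq_norm_sq_to_K, inner_self_eq_norm_sq_to_K,
    ← RCLike.ofReal_pow, ← RCLike.ofReal_pow, ← RCLike.ofReal_sub, RCLike.ofReal_nonneg, sub_nonneg]
  gcongr
  simpa using V.le_of_opNorm_le hV (∑ i, c i • v i)

theorem exists_orthonormal_add_and_sub [Fintype ι] [DecidableEq ι] (hE : ¬ FiniteDimensional 𝕜 E)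
    {v : ι → E} (hv : (1 - gram 𝕜 v).PosSemidef) :
    ∃ w : ι → E, Orthonormal 𝕜 (v + w) ∧ Orthonormal 𝕜 (v - w) := by
  set K := Submodule.span 𝕜 (Set.range v)
  have := FiniteDimensional.span_of_finite 𝕜 (Set.finite_range v)
  obtain ⟨g, hg, hgK⟩ := exists_orthonormal_mem_orthogonal hE K ι
  set M := CFC.sqrt (1 - gram 𝕜 v)
  have hM : Mᴴ * M = 1 - gram 𝕜 v := by
    rw [← star_eq_conjTranspose, (CFC.sqrt_nonneg _).isSelfAdjoint.star_eq,
      CFC.sqrt_mul_sqrt_self _ hv.nonneg]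
  set w : ι → E := fun j ↦ ∑ k, M k j • g k
  have hvw (i j : ι) : ⟪v i, w j⟫_𝕜 = 0 :=
    Submodule.inner_right_of_mem_orthogonal (Submodule.subset_span (Set.mem_range_self i))
      (Submodule.sum_mem _ fun k _ ↦ Submodule.smul_mem _ _ (hgK k))
  have hw : gram 𝕜 w = 1 - gram 𝕜 v := (hg.gram_sum_smul M).trans hM
  refine ⟨w, ?_, ?_⟩ <;> rw [orthonormal_iff_gram_eq_one]
  · rw [gram_add_of_inner_eq_zero hvw, hw, add_sub_cancel]
  · rw [sub_eq_add_neg, gram_add_of_inner_eq_zero (by simpa using hvw), gram_neg, hw,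
      add_sub_cancel]

end Matrix

theorem ContinuousLinearMap.exists_norm_le_one_comp_eq_of_norm_apply_le {𝕜 E F G : Type*}
    [RCLike 𝕜] [NormedAddCommGroup E] [NormedSpace 𝕜 E] [NormedAddCommGroup F]
    [InnerProductSpace 𝕜 F] [CompleteSpace F] [NormedAddCommGroup G] [NormedSpace 𝕜 G]
    [CompleteSpace G] {S : E →L[𝕜] F} {T : E →L[𝕜] G} (h : ∀ x, ‖T x‖ ≤ ‖S x‖) :
    ∃ C : F →L[𝕜] G, ‖C‖ ≤ 1 ∧ C ∘L S = T := by
  set K := (LinearMap.range S.toLinearMap).topologicalClosure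
  have hSK (x : E) : S x ∈ K :=
    (LinearMap.range S.toLinearMap).le_topologicalClosure (LinearMap.mem_range_self _ x)
  set e : E →ₗ[𝕜] K := LinearMap.codRestrict K S hSK
  have he : DenseRange e := by
    rw [DenseRange, Subtype.dense_iff, ← Set.range_comp]
    exact subset_rfl
  have hTe (x : E) : ‖T x‖ ≤ 1 * ‖e x‖ := by rw [one_mul]; exact h x
  refine ⟨(T : E →ₗ[𝕜] G).extendOfNorm e ∘L K.orthogonalProjectionOnto, ?_, ?_⟩
  · exact (ContinuousLinearMap.opNorm_comp_le _ _).trans <| mul_le_one₀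
      (LinearMap.opNorm_extendOfNorm_le he zero_le_one hTe) (norm_nonneg _)
      K.orthogonalProjectionOnto_norm_le
  · ext x
    simp only [ContinuousLinearMap.comp_apply]
    rw [K.orthogonalProjectionOnto_mem_subspace_eq_self ⟨S x, hSK x⟩]
    exact LinearMap.extendOfNorm_eq he ⟨1, hTe⟩ x

theorem exists_orthonormal_add_eq_two_smul_of_norm_le_one {𝕜 E ι : Type*} [RCLike 𝕜]
    [NormedAddCommGroup E] [InnerProductSpace 𝕜 E] [Countable ι] {D : E →L[𝕜] E} (hD : ‖D‖ ≤ 1)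
    {e : ι → E} (he : Orthonormal 𝕜 e) (hE : ¬ FiniteDimensional 𝕜 E) (s : Finset ι) :
    ∃ y z : ι → E, Orthonormal 𝕜 y ∧ Orthonormal 𝕜 z ∧
      ∀ i ∈ s, y i + z i = (2 : 𝕜) • D (e i) := by
  classical
  have hx : (1 - Matrix.gram 𝕜 (fun i : s ↦ D (e i))).PosSemidef := by
    rw [← Matrix.orthonormal_iff_gram_eq_one.mp (he.comp _ Subtype.val_injective)]
    exact Matrix.posSemidef_gram_sub_gram_comp hD _
  obtain ⟨w, hplus, hminus⟩ := Matrix.exists_orthonormal_add_and_sub hE hx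
  obtain ⟨y, hy, hys⟩ := hplus.exists_orthonormal_extension hE
  obtain ⟨z, hz, hzs⟩ := hminus.exists_orthonormal_extension hE
  refine ⟨y, z, hy, hz, fun i hi ↦ ?_⟩
  rw [hys ⟨i, hi⟩, hzs ⟨i, hi⟩, two_smul]
  simp only [Pi.add_apply, Pi.sub_apply]
  abel

omit [CompleteSpace H] in
theorem sum_nnnorm_inner_le_traceNorm (S : H →L[ℂ] H) {e f : ℕ → H} (he : Orthonormal ℂ e)
    (hf : Orthonormal ℂ f) (s : Finset ℕ) :
    ∑ n ∈ s, (‖⟪e n, S (f n)⟫‖₊ : ENNReal) ≤ traceNorm S :=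
  (ENNReal.sum_le_tsum s).trans <|
    le_iSup_of_le e <| le_iSup_of_le f <| le_iSup_of_le he <| le_iSup_of_le hf le_rfl

theorem traceNorm_le_traceNorm_of_norm_apply_le {T S : H →L[ℂ] H} (h : ∀ x, ‖T x‖ ≤ ‖S x‖) :
    traceNorm T ≤ traceNorm S := by
  refine iSup₂_le fun e f ↦ iSup₂_le fun he hf ↦ ENNReal.tsum_eq_iSup_sum ▸ iSup_le fun s ↦ ?_
  obtain ⟨C, hC, rfl⟩ := ContinuousLinearMap.exists_norm_le_one_comp_eq_of_norm_apply_le h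
  have hH : ¬ FiniteDimensional ℂ H :=
    fun _ ↦ Module.Finite.not_linearIndependent_of_infinite e he.linearIndependent
  obtain ⟨y, z, hy, hz, hyz⟩ := exists_orthonormal_add_eq_two_smul_of_norm_le_one
    (by rwa [LinearIsometryEquiv.norm_map]) he hH s (D := ContinuousLinearMap.adjoint C)
  have hterm (n : ℕ) (hn : n ∈ s) :
      2 * (‖⟪e n, C (S (f n))⟫‖₊ : ENNReal) ≤ ‖⟪y n, S (f n)⟫‖₊ + ‖⟪z n, S (f n)⟫‖₊ := by
    have : (2 : ℂ) * ⟪e n, C (S (f n))⟫ = ⟪y n, S (f n)⟫ + ⟪z n, S (f n)⟫ := by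
      rw [← inner_add_left, hyz n hn, inner_smul_left, ContinuousLinearMap.adjoint_inner_left,
        map_ofNat]
    have h2 := nnnorm_add_le ⟪y n, S (f n)⟫ ⟪z n, S (f n)⟫
    rw [← this, nnnorm_mul] at h2
    exact_mod_cast h2
  rw [← ENNReal.mul_le_mul_iff_right two_ne_zero ENNReal.ofNat_ne_top, Finset.mul_sum, two_mul]
  calc ∑ n ∈ s, 2 * (‖⟪e n, C (S (f n))⟫‖₊ : ENNReal)
      ≤ ∑ n ∈ s, ((‖⟪y n, S (f n)⟫‖₊ : ENNReal) + ‖⟪z n, S (f n)⟫‖₊) := Finset.sum_le_sum hterm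
    _ ≤ traceNorm S + traceNorm S := by
      rw [Finset.sum_add_distrib]
      gcongr
      · exact sum_nnnorm_inner_le_traceNorm S hy hf s
      · exact sum_nnnorm_inner_le_traceNorm S hz hf s

theorem traceNorm_comp_le_of_sq_le_general
    (A : H →L[ℂ] H) (B : H →ₗ.[ℂ] H)
    (hAB : ∀ (x : H) (hx : x ∈ B.domain), ‖A x‖ ≤ ‖B ⟨x, hx⟩‖)
    (Y : H →L[ℂ] H) (hYrange : ∀ g : H, Y g ∈ B.domain)
    (BY : H →L[ℂ] H) (hBY : ∀ g : H, BY g = B ⟨Y g, hYrange g⟩)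
    (hBYtc : traceNorm BY < ⊤) :
    traceNorm (A.comp Y) < ⊤ ∧ traceNorm (A.comp Y) ≤ traceNorm BY := by
  have hle : traceNorm (A.comp Y) ≤ traceNorm BY :=
    traceNorm_le_traceNorm_of_norm_apply_le fun x ↦ by simpa [hBY] using hAB (Y x) (hYrange x)
  exact ⟨hle.trans_lt hBYtc, hle⟩

/-- Let A be a bounded operator and B a self-adjoint (possibly unbounded)
operator with `|A|² ≤ |B|²` as quadratic forms (i.e. `‖Ax‖ ≤ ‖Bx‖` on the domain of B), and
let Y be a bounded operator with range in the domain of B such that BY is trace class.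
Then AY is trace class and `‖AY‖₁ ≤ ‖BY‖₁`. -/
theorem traceNorm_comp_le_of_sq_le
    (A : H →L[ℂ] H) (B : H →ₗ.[ℂ] H) (hB : IsSelfAdjoint B)
    (hAB : ∀ (x : H) (hx : x ∈ B.domain), ‖A x‖ ≤ ‖B ⟨x, hx⟩‖)
    (Y : H →L[ℂ] H) (hYrange : ∀ g : H, Y g ∈ B.domain)
    (BY : H →L[ℂ] H) (hBY : ∀ g : H, BY g = B ⟨Y g, hYrange g⟩)
    (hBYtc : traceNorm BY < ⊤) :
    traceNorm (A.comp Y) < ⊤ ∧ traceNorm (A.comp Y) ≤ traceNorm BY :=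
  traceNorm_comp_le_of_sq_le_general A B hAB Y hYrange BY hBY hBYtc
end

section
/- If C is a trace-class operator on a Hilbert space with singular value decomposition C = Σₙ λₙ |fₙ⟩⟨gₙ|, and X is a self-adjoint operator with XC trace class, then for every n with λₙ ≠ 0 the vector fₙ lies in the domain of X. -/
/-!
Orthonormality of `(gₙ)` gives `C gₙ = λₙ fₙ`, so the bound on the form `⟪X x, C gₙ⟫` says that
`x ↦ ⟪X x, fₙ⟫` is bounded by `M / |λₙ|` on `Dom X`. That is exactly `fₙ ∈ Dom X† = Dom X`.
-/

open LinearPMap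

section

variable {𝕜 E F : Type*} [RCLike 𝕜]
  [NormedAddCommGroup E] [InnerProductSpace 𝕜 E] [NormedAddCommGroup F] [InnerProductSpace 𝕜 F]

theorem LinearPMap.mem_adjoint_domain_of_norm_inner_le [CompleteSpace E] {T : E →ₗ.[𝕜] F}
    (y : F) (K : ℝ) (h : ∀ x : T.domain, ‖inner 𝕜 (T x) y‖ ≤ K * ‖x‖) : y ∈ T†.domain := by
  rw [mem_adjoint_domain_iff]
  refine AddMonoidHomClass.continuous_of_bound _ K fun x => ?_
  simp only [LinearMap.comp_apply, innerₛₗ_apply_apply]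
  rw [← inner_conj_symm, RCLike.norm_conj]
  exact h x

theorem IsSelfAdjoint.mem_domain_of_norm_inner_le [CompleteSpace E] {A : E →ₗ.[𝕜] E}
    (hA : IsSelfAdjoint A) (y : E) (K : ℝ) (h : ∀ x : A.domain, ‖inner 𝕜 (A x) y‖ ≤ K * ‖x‖) :
    y ∈ A.domain :=
  isSelfAdjoint_def.mp hA ▸ mem_adjoint_domain_of_norm_inner_le y K h

variable {ι : Type*} {c : ι → 𝕜} {g : ι → E} {f : ι → F}

theorem summable_smul_innerSL_smulRight [CompleteSpace F] (hc : Summable fun i => ‖c i‖)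
    (hg : ∀ i, ‖g i‖ ≤ 1) (hf : ∀ i, ‖f i‖ ≤ 1) :
    Summable fun i => c i • (innerSL 𝕜 (g i)).smulRight (f i) := by
  refine .of_norm (hc.of_nonneg_of_le (fun _ => norm_nonneg _) fun i => ?_)
  rw [norm_smul, ContinuousLinearMap.norm_smulRight_apply, innerSL_apply_norm]
  exact mul_le_of_le_one_right (norm_nonneg _) (mul_le_one₀ (hg i) (norm_nonneg _) (hf i))

theorem tsum_smul_innerSL_smulRight_apply_of_orthonormal
    (hsum : Summable fun i => c i • (innerSL 𝕜 (g i)).smulRight (f i)) (hg : Orthonormal 𝕜 g)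
    (n : ι) : (∑' i, c i • (innerSL 𝕜 (g i)).smulRight (f i)) (g n) = c n • f n := by
  classical
  rw [← ContinuousLinearMap.apply_apply (g n), ContinuousLinearMap.map_tsum _ hsum]
  simp [orthonormal_iff_ite.mp hg]

end

variable {H : Type*} [NormedAddCommGroup H] [InnerProductSpace ℂ H] [CompleteSpace H]

local notation "⟪" x ", " y "⟫" => @inner ℂ _ _ x y

theorem singular_vector_mem_domain_general
    (X : H →ₗ.[ℂ] H) (hX : IsSelfAdjoint X)
    (C : H →L[ℂ] H) (lam : ℕ → ℝ)
    (hlam : Summable lam)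
    (f g : ℕ → H) (hf : Orthonormal ℂ f) (hg : Orthonormal ℂ g)
    (hSVD : C = ∑' n, (lam n : ℂ) • ((innerSL ℂ (g n)).smulRight (f n)))
    (M : ℝ)
    (hform : ∀ (x : H) (hx : x ∈ X.domain) (y : H),
      ‖⟪X ⟨x, hx⟩, C y⟫‖ ≤ M * ‖x‖ * ‖y‖) :
    ∀ n, lam n ≠ 0 → f n ∈ X.domain := by
  intro n hn
  have hsum : Summable fun m => (lam m : ℂ) • (innerSL ℂ (g m)).smulRight (f m) :=
    summable_smul_innerSL_smulRight (by simpa using hlam.abs) (fun m => (hg.1 m).le)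
      (fun m => (hf.1 m).le)
  have hCg : C (g n) = (lam n : ℂ) • f n :=
    hSVD ▸ tsum_smul_innerSL_smulRight_apply_of_orthonormal hsum hg n
  refine hX.mem_domain_of_norm_inner_le (f n) (M / |lam n|) fun x => ?_
  have hbound := hform x x.2 (g n)
  simp only [Subtype.coe_eta] at hbound
  rw [hCg, inner_smul_right, norm_mul, hg.1 n, mul_one, Complex.norm_real, Real.norm_eq_abs]
    at hbound
  rw [div_mul_eq_mul_div, le_div_iff₀ (abs_pos.mpr hn)]
  exact (mul_comm _ _).trans_le hbound

/-- If C is a trace-class operator with singular value decomposition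
`C = Σₙ λₙ |fₙ⟩⟨gₙ|` and X is self-adjoint such that XC is trace class (in particular the
sesquilinear form `(x, g) ↦ ⟨Xx, Cg⟩` is bounded), then for every n with `λₙ ≠ 0` the singular
vector `fₙ` lies in the domain of X. -/
theorem singular_vector_mem_domain
    (X : H →ₗ.[ℂ] H) (hX : IsSelfAdjoint X)
    (C : H →L[ℂ] H) (lam : ℕ → ℝ) (hlam_nonneg : ∀ n, 0 ≤ lam n)
    (hlam : Summable lam)
    (f g : ℕ → H) (hf : Orthonormal ℂ f) (hg : Orthonormal ℂ g)
    (hSVD : C = ∑' n, (lam n : ℂ) • ((innerSL ℂ (g n)).smulRight (f n)))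
    (M : ℝ)
    (hform : ∀ (x : H) (hx : x ∈ X.domain) (y : H),
      ‖⟪X ⟨x, hx⟩, C y⟫‖ ≤ M * ‖x‖ * ‖y‖) :
    ∀ n, lam n ≠ 0 → f n ∈ X.domain :=
  singular_vector_mem_domain_general X hX C lam hlam f g hf hg hSVD M hform
end

section
/- Let A be a bounded operator on a Hilbert space H with inner product ⟨·,·⟩, and suppose A is sectorial in the sense that there exists 0 < γ < ∞ with |⟨f, Im(A) f⟩| ≤ −γ ⟨f, Re(A) f⟩ for all f ∈ H, where −Re(A) is a positive operator. If h ∈ H satisfies Re(A) h = 0, then A h = 0. -/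
open ContinuousLinearMap Complex

variable {H : Type*} [NormedAddCommGroup H] [InnerProductSpace ℂ H] [CompleteSpace H]

local notation "⟪" x ", " y "⟫" => @inner ℂ _ _ x y

/-! A self-adjoint `B` whose quadratic form is dominated by that of a self-adjoint `R` vanishes
on `ker R`: for `h ∈ ker R` and `x = B h`, the form of `R` at `h + t x` is `O(t²)`, while the
form of `B` there has real part `2 t ‖x‖² + O(t²)`; letting `t → 0⁺` forces `x = 0`.
Apply this to `B = Im A`, `R = Re A` and use `A = Re A + i Im A`. -/

theorem eq_zero_of_forall_pos_abs_mul_add_sq_le {a b c : ℝ}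
    (h : ∀ t > 0, |a * t + b * t ^ 2| ≤ c * t ^ 2) : a = 0 := by
  have hdiv : ∀ t > 0, |a + b * t| - c * t ≤ 0 := fun t ht => by
    have := h t ht
    rw [show a * t + b * t ^ 2 = t * (a + b * t) by ring, abs_mul, abs_of_pos ht] at this
    nlinarith
  have hcont : Continuous fun t : ℝ => |a + b * t| - c * t := by fun_prop
  have hlim : |a + b * 0| - c * 0 ≤ 0 :=
    le_of_tendsto (hcont.tendsto 0 |>.mono_left nhdsWithin_le_nhds)
      (eventually_nhdsWithin_of_forall (s := Set.Ioi 0) hdiv)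
  simpa using hlim

theorem inner_add_smul_map_add_smul {E F : Type*} [NormedAddCommGroup E]
    [InnerProductSpace ℂ E] [FunLike F E E] [LinearMapClass F ℂ E E] (T : F) (h x : E) (t : ℝ) :
    ⟪h + (t : ℂ) • x, T (h + (t : ℂ) • x)⟫ =
      ⟪h, T h⟫ + t * (⟪h, T x⟫ + ⟪x, T h⟫) + (t ^ 2 : ℝ) * ⟪x, T x⟫ := by
  simp only [map_add, map_smul, inner_add_left, inner_add_right, inner_smul_left,
    inner_smul_right, conj_ofReal]
  push_cast
  ring

theorem IsSelfAdjoint.apply_eq_zero_of_norm_inner_le {B R : H →L[ℂ] H}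
    (hB : IsSelfAdjoint B) (hR : IsSelfAdjoint R) {c : ℝ}
    (hdom : ∀ f, ‖⟪f, B f⟫‖ ≤ c * (⟪f, R f⟫).re) {h : H} (hh : R h = 0) : B h = 0 := by
  have hBh : ⟪h, B h⟫ = 0 := norm_le_zero_iff.mp (by simpa [hh] using hdom h)
  have hBBh : ⟪h, B (B h)⟫ = ‖B h‖ ^ 2 :=
    (hB.isSymmetric h (B h)).symm.trans (inner_self_eq_norm_sq_to_K _)
  have hRBh : ⟪h, R (B h)⟫ = 0 := (hR.isSymmetric h (B h)).symm.trans (by simp [hh])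
  have hquad : ∀ t > 0, |2 * ‖B h‖ ^ 2 * t + (⟪B h, B (B h)⟫).re * t ^ 2| ≤
      c * (⟪B h, R (B h)⟫).re * t ^ 2 := by
    intro t ht
    have hf := hdom (h + (t : ℂ) • B h)
    rw [inner_add_smul_map_add_smul, inner_add_smul_map_add_smul, hBh, hBBh, hh, hRBh,
      inner_zero_right, inner_self_eq_norm_sq_to_K] at hf
    simp only [inner_zero_right, zero_add, mul_zero, re_ofReal_mul] at hf
    calc |2 * ‖B h‖ ^ 2 * t + (⟪B h, B (B h)⟫).re * t ^ 2|
        = |(t * (‖B h‖ ^ 2 + ‖B h‖ ^ 2) + (t ^ 2 : ℝ) * ⟪B h, B (B h)⟫ : ℂ).re| := by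
          rw [add_re, re_ofReal_mul, ← ofReal_pow, ← ofReal_add, re_ofReal_mul, ofReal_re]
          ring_nf
      _ ≤ _ := abs_re_le_norm _
      _ ≤ _ := hf
      _ = _ := by ring
  simpa using eq_zero_of_forall_pos_abs_mul_add_sq_le hquad

theorem sectorial_realPart_kernel_general (A : H →L[ℂ] H) (γ : ℝ)
    (ReA ImA : H →L[ℂ] H)
    (hRe : ReA = (1 / 2 : ℂ) • (A + ContinuousLinearMap.adjoint A))
    (hIm : ImA = (1 / (2 * Complex.I)) • (A - ContinuousLinearMap.adjoint A))
    (hsect : ∀ f : H, ‖⟪f, ImA f⟫‖ ≤ -γ * (⟪f, ReA f⟫).re)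
    (h : H) (hh : ReA h = 0) : A h = 0 := by
  have hReA : ReA = realPart A := by
    rw [hRe, realPart_apply_coe, star_eq_adjoint, ← coe_smul]
    norm_num
  have hImA : ImA = imaginaryPart A := by
    rw [hIm, imaginaryPart_apply_coe, star_eq_adjoint, ← coe_smul, smul_smul]
    field_simp
    simp
  have hImh : ImA h = 0 :=
    (hImA ▸ (imaginaryPart A).prop : IsSelfAdjoint ImA).apply_eq_zero_of_norm_inner_le
      (hReA ▸ (realPart A).prop) hsect hh
  rw [← realPart_add_I_smul_imaginaryPart A, ← hReA, ← hImA]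
  simp [hh, hImh]

/-- If a bounded operator A on a Hilbert space is sectorial, i.e.
`|⟨f, Im(A) f⟩| ≤ -γ ⟨f, Re(A) f⟩` for some `γ > 0`, where `-Re(A)` is positive, then
`Re(A) h = 0` implies `A h = 0`. -/
theorem sectorial_realPart_kernel (A : H →L[ℂ] H) (γ : ℝ) (hγ : 0 < γ)
    (ReA ImA : H →L[ℂ] H)
    (hRe : ReA = (1 / 2 : ℂ) • (A + ContinuousLinearMap.adjoint A))
    (hIm : ImA = (1 / (2 * Complex.I)) • (A - ContinuousLinearMap.adjoint A))
    (hpos : ∀ f : H, (⟪f, ReA f⟫).re ≤ 0)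
    (hsect : ∀ f : H, ‖⟪f, ImA f⟫‖ ≤ -γ * (⟪f, ReA f⟫).re)
    (h : H) (hh : ReA h = 0) : A h = 0 :=
  sectorial_realPart_kernel_general A γ ReA ImA hRe hIm hsect h hh
end

section
/- Let ρ ∈ B₁(ℓ²(ℤ^d)) be a trace-class operator such that X_j ρ and ρ X_j are trace class for each j. Then the fiber map p ↦ [ρ]_p ∈ L¹(T^d), defined by [ρ]_p(k) = ρ̂(k − p/2, k + p/2) via the momentum-representation kernel, can be chosen continuously differentiable in p, with ∂/∂p_j [ρ]_p = (i/2)[{X_j, ρ}]_p. -/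
open MeasureTheory Complex

instance : Fact ((0 : ℝ) < 2 * Real.pi) := ⟨by positivity⟩

/-- The character `e^{i x·k}` of the torus `T^d = (ℝ/2πℤ)^d` at the lattice point
`x ∈ ℤ^d`. -/
noncomputable def torusChar {d : ℕ} (x : Fin d → ℤ) (k : Fin d → AddCircle (2 * Real.pi)) :
    ℂ :=
  ∏ i, ((AddCircle.toCircle ((x i) • k i) : Circle) : ℂ)

/-- The fiber `[ρ]_p(k) = ρ̂(k - p/2, k + p/2)
  = (2π)^{-d} Σ_{x₁,x₂} ρ(x₁,x₂) e^{-i k·(x₁-x₂)} e^{i p·(x₁+x₂)/2}`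
of a trace-class operator on `ℓ²(ℤ^d)` given by its position-representation kernel ρ. -/
noncomputable def fiberKernel {d : ℕ} (ρk : (Fin d → ℤ) → (Fin d → ℤ) → ℂ)
    (p : Fin d → ℝ) (k : Fin d → AddCircle (2 * Real.pi)) : ℂ :=
  (1 / (2 * Real.pi) ^ d) * ∑' q : (Fin d → ℤ) × (Fin d → ℤ),
    ρk q.1 q.2 * torusChar (q.2 - q.1) k *
      Complex.exp (Complex.I * (∑ i, p i * ((q.1 i + q.2 i : ℤ) : ℝ)) / 2)

/-! In momentum representation the fiber is the series
`[ρ]_p = Σ_q c_q e^{i p·(x₁+x₂)/2} χ_{x₂-x₁}`, a sum of plane waves in `p` with values in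
the Banach space `C(T^d, ℂ)`, where every character `χ` has sup norm one. Summability of the kernel
makes the series converge uniformly in `p`, and the first moments dominate the `p`-derivatives
of the terms uniformly in `p`, so the series can be differentiated termwise and is `C¹`.
Composing with the continuous linear inclusion `C(T^d, ℂ) → L¹(T^d)` gives the fiber map. -/

section PlaneWaveSeries

variable {ι V E : Type*} [NormedAddCommGroup V] [NormedSpace ℝ V]
  [NormedAddCommGroup E] [NormedSpace ℂ E]

theorem hasFDerivAt_planeWave (a : ℂ) (φ : StrongDual ℝ V) (v : E) (p : V) :
    HasFDerivAt (fun p => (a * cexp (φ p * I)) • v)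
      (φ.smulRight ((a * cexp (φ p * I) * I) • v)) p := by
  have hwave : HasDerivAt (fun t : ℝ => (a * cexp (t * I)) • v)
      ((a * cexp (φ p * I) * I) • v) (φ p) := by
    simpa [mul_assoc] using
      ((((hasDerivAt_id (φ p)).ofReal_comp.mul_const I).cexp).const_mul a).smul_const v
  refine (hwave.hasFDerivAt.comp p φ.hasFDerivAt).congr_fderiv ?_
  ext w
  simp

theorem norm_planeWave_fderiv (a : ℂ) (φ : StrongDual ℝ V) (v : E) (p : V) :
    ‖φ.smulRight ((a * cexp (φ p * I) * I) • v)‖ = ‖φ‖ * (‖a‖ * ‖v‖) := by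
  rw [ContinuousLinearMap.norm_smulRight_apply, norm_smul, norm_mul, norm_mul,
    norm_exp_ofReal_mul_I, norm_I, mul_one, mul_one]

variable [CompleteSpace E] {a : ι → ℂ} {φ : ι → StrongDual ℝ V} {v : ι → E}

theorem summable_planeWave (ha : Summable fun q => ‖a q‖ * ‖v q‖) (p : V) :
    Summable fun q => (a q * cexp (φ q p * I)) • v q :=
  ha.of_norm_bounded fun _ => by rw [norm_smul, norm_mul, norm_exp_ofReal_mul_I, mul_one]

theorem summable_planeWave_fderiv (haφ : Summable fun q => ‖φ q‖ * (‖a q‖ * ‖v q‖))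
    (p : V) :
    Summable fun q => (φ q).smulRight ((a q * cexp (φ q p * I) * I) • v q) :=
  haφ.of_norm_bounded fun _ => (norm_planeWave_fderiv _ _ _ p).le

theorem hasFDerivAt_tsum_planeWave (ha : Summable fun q => ‖a q‖ * ‖v q‖)
    (haφ : Summable fun q => ‖φ q‖ * (‖a q‖ * ‖v q‖)) (p : V) :
    HasFDerivAt (fun p => ∑' q, (a q * cexp (φ q p * I)) • v q)
      (∑' q, (φ q).smulRight ((a q * cexp (φ q p * I) * I) • v q)) p :=
  hasFDerivAt_tsum haφ (fun _ p => hasFDerivAt_planeWave _ _ _ p)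
    (fun _ p => (norm_planeWave_fderiv _ _ _ p).le) (summable_planeWave ha 0) p

theorem contDiff_tsum_planeWave (ha : Summable fun q => ‖a q‖ * ‖v q‖)
    (haφ : Summable fun q => ‖φ q‖ * (‖a q‖ * ‖v q‖)) :
    ContDiff ℝ 1 fun p => ∑' q, (a q * cexp (φ q p * I)) • v q :=
  contDiff_one_iff_hasFDerivAt.2 ⟨_,
    continuous_tsum (fun q => by fun_prop) haφ fun q p => (norm_planeWave_fderiv _ _ _ p).le,
    hasFDerivAt_tsum_planeWave ha haφ⟩

theorem hasSum_fderiv_tsum_planeWave_apply (ha : Summable fun q => ‖a q‖ * ‖v q‖)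
    (haφ : Summable fun q => ‖φ q‖ * (‖a q‖ * ‖v q‖)) (p w : V) :
    HasSum (fun q => φ q w • (a q * cexp (φ q p * I) * I) • v q)
      (fderiv ℝ (fun p => ∑' q, (a q * cexp (φ q p * I)) • v q) p w) := by
  rw [(hasFDerivAt_tsum_planeWave ha haφ p).fderiv]
  exact (summable_planeWave_fderiv haφ p).hasSum.mapL (ContinuousLinearMap.apply ℝ E w)

end PlaneWaveSeries

section Fiber

variable {d : ℕ}

theorem norm_torusChar (x : Fin d → ℤ) (k : Fin d → AddCircle (2 * Real.pi)) :
    ‖torusChar x k‖ = 1 := by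
  simp [torusChar, Circle.norm_coe]

theorem continuous_torusChar (x : Fin d → ℤ) : Continuous (torusChar x) :=
  continuous_finsetProd _ fun i _ => continuous_subtype_val.comp <|
    AddCircle.continuous_toCircle.comp <| (continuous_zsmul (x i)).comp (continuous_apply i)

noncomputable def torusCharCM (x : Fin d → ℤ) : C(Fin d → AddCircle (2 * Real.pi), ℂ) :=
  ⟨torusChar x, continuous_torusChar x⟩

theorem norm_torusCharCM_le (x : Fin d → ℤ) : ‖torusCharCM x‖ ≤ 1 :=
  (ContinuousMap.norm_le _ zero_le_one).2 fun k => (norm_torusChar x k).le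

noncomputable def fiberPhase (q : (Fin d → ℤ) × (Fin d → ℤ)) :
    StrongDual ℝ (Fin d → ℝ) :=
  ∑ i, (((q.1 i + q.2 i : ℤ) : ℝ) / 2) • ContinuousLinearMap.proj i

theorem fiberPhase_apply (q : (Fin d → ℤ) × (Fin d → ℤ)) (p : Fin d → ℝ) :
    fiberPhase q p = (∑ i, p i * ((q.1 i + q.2 i : ℤ) : ℝ)) / 2 := by
  simp [fiberPhase, Finset.sum_div, mul_comm, mul_div_assoc]

theorem norm_fiberPhase_le (q : (Fin d → ℤ) × (Fin d → ℤ)) :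
    ‖fiberPhase q‖ ≤ ∑ i, |((q.1 i + q.2 i : ℤ) : ℝ)| / 2 := by
  refine ContinuousLinearMap.opNorm_le_bound _ (by positivity) fun p => ?_
  rw [fiberPhase_apply, Real.norm_eq_abs, abs_div, abs_two, ← Finset.sum_div,
    div_mul_eq_mul_div, Finset.sum_mul]
  gcongr
  refine (Finset.abs_sum_le_sum_abs _ _).trans (Finset.sum_le_sum fun i _ => ?_)
  rw [abs_mul, mul_comm]
  gcongr
  exact norm_le_pi_norm p i

variable (ρk : (Fin d → ℤ) → (Fin d → ℤ) → ℂ)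

noncomputable def fiberSeries (p : Fin d → ℝ) : C(Fin d → AddCircle (2 * Real.pi), ℂ) :=
  ∑' q : (Fin d → ℤ) × (Fin d → ℤ),
    (1 / (2 * Real.pi) ^ d * ρk q.1 q.2 * cexp (fiberPhase q p * I)) • torusCharCM (q.2 - q.1)

variable {ρk}

theorem summable_fiberCoeff
    (htc : Summable fun q : (Fin d → ℤ) × (Fin d → ℤ) => ‖ρk q.1 q.2‖) :
    Summable fun q : (Fin d → ℤ) × (Fin d → ℤ) =>
      ‖1 / (2 * Real.pi : ℂ) ^ d * ρk q.1 q.2‖ * ‖torusCharCM (q.2 - q.1)‖ :=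
  (htc.mul_left ‖1 / (2 * Real.pi : ℂ) ^ d‖).of_nonneg_of_le (fun _ => by positivity)
    fun _ => by
      rw [norm_mul]
      exact mul_le_of_le_one_right (by positivity) (norm_torusCharCM_le _)

theorem summable_fiberPhase_mul_fiberCoeff
    (hmom : ∀ j : Fin d, Summable fun q : (Fin d → ℤ) × (Fin d → ℤ) =>
      |((q.1 j + q.2 j : ℤ) : ℝ)| * ‖ρk q.1 q.2‖) :
    Summable fun q : (Fin d → ℤ) × (Fin d → ℤ) => ‖fiberPhase q‖ *
      (‖1 / (2 * Real.pi : ℂ) ^ d * ρk q.1 q.2‖ * ‖torusCharCM (q.2 - q.1)‖) := by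
  refine ((summable_sum (s := Finset.univ) fun j _ => hmom j).mul_left
    (‖1 / (2 * Real.pi : ℂ) ^ d‖ / 2)).of_nonneg_of_le (fun _ => by positivity) fun q => ?_
  calc ‖fiberPhase q‖ *
        (‖1 / (2 * Real.pi : ℂ) ^ d * ρk q.1 q.2‖ * ‖torusCharCM (q.2 - q.1)‖)
      ≤ (∑ j, |((q.1 j + q.2 j : ℤ) : ℝ)| / 2) *
          (‖1 / (2 * Real.pi : ℂ) ^ d‖ * ‖ρk q.1 q.2‖ * 1) := by
        rw [← norm_mul]
        gcongr
        exacts [norm_fiberPhase_le q, norm_torusCharCM_le _]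
    _ = ‖1 / (2 * Real.pi : ℂ) ^ d‖ / 2 *
          ∑ j, |((q.1 j + q.2 j : ℤ) : ℝ)| * ‖ρk q.1 q.2‖ := by
        rw [Finset.mul_sum, Finset.sum_mul]
        exact Finset.sum_congr rfl fun j _ => by ring

theorem fiberSeries_apply
    (htc : Summable fun q : (Fin d → ℤ) × (Fin d → ℤ) => ‖ρk q.1 q.2‖) (p : Fin d → ℝ)
    (k : Fin d → AddCircle (2 * Real.pi)) :
    fiberSeries ρk p k = fiberKernel ρk p k := by
  rw [fiberSeries,
    ← ContinuousMap.tsum_apply (summable_planeWave (summable_fiberCoeff htc) p), fiberKernel,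
    ← tsum_mul_left]
  refine tsum_congr fun q => ?_
  simp only [ContinuousMap.smul_apply, torusCharCM, ContinuousMap.coe_mk, smul_eq_mul,
    fiberPhase_apply]
  push_cast
  ring_nf

theorem fderiv_fiberSeries_single_apply
    (htc : Summable fun q : (Fin d → ℤ) × (Fin d → ℤ) => ‖ρk q.1 q.2‖)
    (hmom : ∀ j : Fin d, Summable fun q : (Fin d → ℤ) × (Fin d → ℤ) =>
      |((q.1 j + q.2 j : ℤ) : ℝ)| * ‖ρk q.1 q.2‖)
    (p : Fin d → ℝ) (j : Fin d) (k : Fin d → AddCircle (2 * Real.pi)) :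
    fderiv ℝ (fiberSeries ρk) p (Pi.single j 1) k = (I / 2) *
      ((1 / (2 * Real.pi) ^ d) * ∑' q : (Fin d → ℤ) × (Fin d → ℤ),
        ((q.1 j + q.2 j : ℤ) : ℝ) * ρk q.1 q.2 * torusChar (q.2 - q.1) k *
          cexp (I * (∑ i, p i * ((q.1 i + q.2 i : ℤ) : ℝ)) / 2)) := by
  have hsum := ContinuousMap.hasSum_apply (hasSum_fderiv_tsum_planeWave_apply
    (summable_fiberCoeff htc) (summable_fiberPhase_mul_fiberCoeff hmom) p (Pi.single j 1)) k
  refine hsum.tsum_eq.symm.trans ?_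
  rw [← tsum_mul_left, ← tsum_mul_left]
  refine tsum_congr fun q => ?_
  simp only [ContinuousMap.smul_apply, torusCharCM, ContinuousMap.coe_mk, real_smul,
    smul_eq_mul, fiberPhase_apply, Pi.single_apply, ite_mul, one_mul, zero_mul,
    Finset.sum_ite_eq', Finset.mem_univ, if_true]
  push_cast
  ring_nf

end Fiber

/-- If ρ is trace class (summable position kernel) and `X_j ρ`, `ρ X_j` are
trace class (first-moment summability of the kernel), then the fiber map
`p ↦ [ρ]_p ∈ L¹(T^d)` can be chosen continuously differentiable in p, with
`∂/∂p_j [ρ]_p = (i/2) [{X_j, ρ}]_p`, where `{X_j, ρ}` has kernel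
`(x₁ⱼ + x₂ⱼ) ρ(x₁, x₂)`. -/
theorem fiber_map_contDiff {d : ℕ}
    (ρk : (Fin d → ℤ) → (Fin d → ℤ) → ℂ)
    (htc : Summable fun q : (Fin d → ℤ) × (Fin d → ℤ) => ‖ρk q.1 q.2‖)
    (hmom : ∀ j : Fin d, Summable fun q : (Fin d → ℤ) × (Fin d → ℤ) =>
      |((q.1 j + q.2 j : ℤ) : ℝ)| * ‖ρk q.1 q.2‖) :
    ∃ F : (Fin d → ℝ) → Lp ℂ 1 (volume : Measure (Fin d → AddCircle (2 * Real.pi))),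
      ContDiff ℝ 1 F ∧
      (∀ p : Fin d → ℝ,
        (F p : (Fin d → AddCircle (2 * Real.pi)) → ℂ) =ᵐ[volume] fiberKernel ρk p) ∧
      (∀ (p : Fin d → ℝ) (j : Fin d),
        ((fderiv ℝ F p) (Pi.single j 1) : (Fin d → AddCircle (2 * Real.pi)) → ℂ)
          =ᵐ[volume]
        fun k => (Complex.I / 2) *
          ((1 / (2 * Real.pi) ^ d) * ∑' q : (Fin d → ℤ) × (Fin d → ℤ),
            ((q.1 j + q.2 j : ℤ) : ℝ) * ρk q.1 q.2 * torusChar (q.2 - q.1) k *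
              Complex.exp (Complex.I * (∑ i, p i * ((q.1 i + q.2 i : ℤ) : ℝ)) / 2))) := by
  let L := ContinuousMap.toLp (E := ℂ) 1
    (volume : Measure (Fin d → AddCircle (2 * Real.pi))) ℝ
  have hG : ContDiff ℝ 1 (fiberSeries ρk) :=
    contDiff_tsum_planeWave (summable_fiberCoeff htc) (summable_fiberPhase_mul_fiberCoeff hmom)
  refine ⟨L ∘ fiberSeries ρk, L.contDiff.comp hG, fun p => ?_, fun p j => ?_⟩
  · filter_upwards [ContinuousMap.coeFn_toLp (p := 1) (𝕜 := ℝ) volume (fiberSeries ρk p)]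
      with k hk
    rw [Function.comp_apply, hk, fiberSeries_apply htc]
  · have hF : fderiv ℝ (L ∘ fiberSeries ρk) p = L.comp (fderiv ℝ (fiberSeries ρk) p) :=
      (L.hasFDerivAt.comp p ((hG.differentiable one_ne_zero) p).hasFDerivAt).fderiv
    filter_upwards [ContinuousMap.coeFn_toLp (p := 1) (𝕜 := ℝ) volume
      (fderiv ℝ (fiberSeries ρk) p (Pi.single j 1))] with k hk
    rw [hF, ContinuousLinearMap.comp_apply, hk, fderiv_fiberSeries_single_apply htc hmom]
end
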